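/- In the reduced type-B Birman–Murakami–Wenzl algebra BB_n(R): (i) for 2 ≤ i ≤ n, Y_ie_{i−1} = λ⁻¹q0⁻¹·Y_{i−1}e_{i−1} − q1q0⁻¹λ⁻¹·e_{i−1}; (ii) for 2 ≤ i ≤ n, e_{i−1}Y_i = λ(q0⁻¹ − δ)·e_{i−1}Y_{i−1} + λ(δA − q1q0⁻¹)·e_{i−1}; (iii) for 1 ≤ i ≤ n−1, (1 − q0δ)·X_iY_ie_i = (q1λ − q0δλA)·e_i + q0·Y_ie_i. -/
import Mathlib


namespace BMWB

inductive Gen (n : ℕ) : Type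
  | X : Fin (n - 1) → Gen n
  | Xinv : Fin (n - 1) → Gen n
  | Y : 0 < n → Gen n
  | Yinv : 0 < n → Gen n

variable (R : Type) [CommRing R]

def fX {n : ℕ} (i : Fin (n - 1)) : FreeAlgebra R (Gen n) := FreeAlgebra.ι R (Gen.X i)
def fXinv {n : ℕ} (i : Fin (n - 1)) : FreeAlgebra R (Gen n) := FreeAlgebra.ι R (Gen.Xinv i)
def fY {n : ℕ} (h : 0 < n) : FreeAlgebra R (Gen n) := FreeAlgebra.ι R (Gen.Y h)
def fYinv {n : ℕ} (h : 0 < n) : FreeAlgebra R (Gen n) := FreeAlgebra.ι R (Gen.Yinv h)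
def fe {n : ℕ} (deli : R) (i : Fin (n - 1)) : FreeAlgebra R (Gen n) :=
  1 - deli • (fX R i - fXinv R i)

variable (lam lami deli q0 q1 A : R) (n : ℕ)

/-- The defining relations of the reduced Birman-Murakami-Wenzl algebra of Coxeter type B. -/
inductive Rel : FreeAlgebra R (Gen n) → FreeAlgebra R (Gen n) → Prop
  | XXinv (i : Fin (n - 1)) : Rel (fX R i * fXinv R i) 1
  | XinvX (i : Fin (n - 1)) : Rel (fXinv R i * fX R i) 1
  | YYinv (h : 0 < n) : Rel (fY R h * fYinv R h) 1
  | YinvY (h : 0 < n) : Rel (fYinv R h * fY R h) 1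
  | comm (i j : Fin (n - 1)) (h : (j : ℕ) + 1 < (i : ℕ)) :
      Rel (fX R i * fX R j) (fX R j * fX R i)
  | braid (i j : Fin (n - 1)) (h : (i : ℕ) + 1 = (j : ℕ)) :
      Rel (fX R i * fX R j * fX R i) (fX R j * fX R i * fX R j)
  | Xe (i : Fin (n - 1)) : Rel (fX R i * fe R deli i) (lam • fe R deli i)
  | eX (i : Fin (n - 1)) : Rel (fe R deli i * fX R i) (lam • fe R deli i)
  | eXe (i j : Fin (n - 1)) (h : (j : ℕ) + 1 = (i : ℕ)) :
      Rel (fe R deli i * fX R j * fe R deli i) (lami • fe R deli i)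
  | eXinve (i j : Fin (n - 1)) (h : (j : ℕ) + 1 = (i : ℕ)) :
      Rel (fe R deli i * fXinv R j * fe R deli i) (lam • fe R deli i)
  | bYXYX (h : 0 < n) (i : Fin (n - 1)) (hi : (i : ℕ) = 0) :
      Rel (fX R i * fY R h * fX R i * fY R h) (fY R h * fX R i * fY R h * fX R i)
  | Ysq (h : 0 < n) : Rel (fY R h * fY R h) (q1 • fY R h + q0 • (1 : FreeAlgebra R (Gen n)))
  | YXYe (h : 0 < n) (i : Fin (n - 1)) (hi : (i : ℕ) = 0) :
      Rel (fY R h * fX R i * fY R h * fe R deli i) (fe R deli i)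
  | Ycomm (h : 0 < n) (i : Fin (n - 1)) (hi : 0 < (i : ℕ)) :
      Rel (fY R h * fX R i) (fX R i * fY R h)
  | eYe (h : 0 < n) (i : Fin (n - 1)) (hi : (i : ℕ) = 0) :
      Rel (fe R deli i * fY R h * fe R deli i) (A • fe R deli i)

/-- The reduced Birman-Murakami-Wenzl algebra of Coxeter type B, `BB_n(R)`,
presented by generators and relations. -/
abbrev BB : Type := RingQuot (Rel R lam lami deli q0 q1 A n)

noncomputable def mk : FreeAlgebra R (Gen n) →ₐ[R] BB R lam lami deli q0 q1 A n :=
  RingQuot.mkAlgHom R (Rel R lam lami deli q0 q1 A n)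

/-- The generator `Y` (junk value `1` if `n = 0`). -/
noncomputable def YY : BB R lam lami deli q0 q1 A n :=
  if h : 0 < n then mk R lam lami deli q0 q1 A n (fY R h) else 1

/-- The inverse of the generator `Y`. -/
noncomputable def YYi : BB R lam lami deli q0 q1 A n :=
  if h : 0 < n then mk R lam lami deli q0 q1 A n (fYinv R h) else 1

/-- The generator `X_i`, `1 ≤ i ≤ n-1` (junk value `1` out of range). -/
noncomputable def XX (i : ℕ) : BB R lam lami deli q0 q1 A n :=
  if h : i - 1 < n - 1 then mk R lam lami deli q0 q1 A n (fX R ⟨i - 1, h⟩) else 1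

/-- The inverse `X_i⁻¹`. -/
noncomputable def XXi (i : ℕ) : BB R lam lami deli q0 q1 A n :=
  if h : i - 1 < n - 1 then mk R lam lami deli q0 q1 A n (fXinv R ⟨i - 1, h⟩) else 1

/-- The element `e_i := 1 - δ⁻¹ (X_i - X_i⁻¹)`. -/
noncomputable def ee (i : ℕ) : BB R lam lami deli q0 q1 A n :=
  1 - deli • (XX R lam lami deli q0 q1 A n i - XXi R lam lami deli q0 q1 A n i)

/-- `Y_i := X_{i-1} ⋯ X_1 Y X_1⁻¹ ⋯ X_{i-1}⁻¹`. -/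
noncomputable def Yn : ℕ → BB R lam lami deli q0 q1 A n
  | 0 => 1
  | 1 => YY R lam lami deli q0 q1 A n
  | (k + 2) => XX R lam lami deli q0 q1 A n (k + 1) * Yn (k + 1) * XXi R lam lami deli q0 q1 A n (k + 1)

/-- `Y'_i := X_{i-1} ⋯ X_1 Y X_1 ⋯ X_{i-1}`. -/
noncomputable def Yp : ℕ → BB R lam lami deli q0 q1 A n
  | 0 => 1
  | 1 => YY R lam lami deli q0 q1 A n
  | (k + 2) => XX R lam lami deli q0 q1 A n (k + 1) * Yp (k + 1) * XX R lam lami deli q0 q1 A n (k + 1)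

/-- The inverse of `Y'_i`. -/
noncomputable def Ypi : ℕ → BB R lam lami deli q0 q1 A n
  | 0 => 1
  | 1 => YYi R lam lami deli q0 q1 A n
  | (k + 2) => XXi R lam lami deli q0 q1 A n (k + 1) * Ypi (k + 1) * XXi R lam lami deli q0 q1 A n (k + 1)

/-- The set of the images of the generators (and their inverses) of `BB_{m+1}` inside `BB_n`.
Its `Algebra.adjoin` is the image of the canonical algebra homomorphism `BB_{m+1} → BB_n`. -/
noncomputable def genSet (m : ℕ) : Set (BB R lam lami deli q0 q1 A n) :=
  {a | a = YY R lam lami deli q0 q1 A n ∨ a = YYi R lam lami deli q0 q1 A n ∨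
    ∃ i, 1 ≤ i ∧ i ≤ m ∧ (a = XX R lam lami deli q0 q1 A n i ∨ a = XXi R lam lami deli q0 q1 A n i)}

/-- The image of the canonical algebra homomorphism `BB_{m+1}(R) → BB_n(R)`, realized as the
subalgebra generated by the images of the generators `Y, Y⁻¹, X_1, …, X_m` (and inverses). -/
noncomputable def sub (m : ℕ) : Subalgebra R (BB R lam lami deli q0 q1 A n) :=
  Algebra.adjoin R (genSet R lam lami deli q0 q1 A n m)

/-- `X(i,j) = X_i X_{i+1} ⋯ X_j`. -/
noncomputable def Xprod (i j : ℕ) : BB R lam lami deli q0 q1 A n :=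
  ((List.range (j + 1 - i)).map (fun k => XX R lam lami deli q0 q1 A n (i + k))).prod

/-- `E(i,j) = e_i e_{i+2} ⋯ e_j`. -/
noncomputable def Eprod (i j : ℕ) : BB R lam lami deli q0 q1 A n :=
  ((List.range ((j - i) / 2 + 1)).map (fun k => ee R lam lami deli q0 q1 A n (i + 2 * k))).prod

/-- `H_1 = e_1`, `H_{m+1} = e_{m+1} X(m+2, 2m+1) X(m+1, 2m) H_m`. -/
noncomputable def H : ℕ → BB R lam lami deli q0 q1 A n
  | 0 => 1
  | 1 => ee R lam lami deli q0 q1 A n 1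
  | (k + 2) => ee R lam lami deli q0 q1 A n (k + 2) *
      Xprod R lam lami deli q0 q1 A n (k + 3) (2 * k + 3) *
      Xprod R lam lami deli q0 q1 A n (k + 2) (2 * k + 2) * H (k + 1)



section Abstract

variable {R : Type} [CommRing R] {B : Type} [Ring B] [Algebra R B]

theorem inv_unique' {w p q : B} (hp : p * w = 1) (hq : w * q = 1) : p = q := by
  calc p = p * (w * q) := by rw [hq, mul_one]
    _ = (p * w) * q := by rw [mul_assoc]
    _ = q := by rw [hp, one_mul]

/-- Package of facts at "level j": `a = X_j`, `a' = X_j⁻¹`, `e = e_j`, `y = Y_j`. -/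
structure Lv (lam deli q0i q1 A : R) (a a' e y : B) : Prop where
  inv1 : a * a' = 1
  inv2 : a' * a = 1
  edef : e = 1 - deli • (a - a')
  ae : a * e = lam • e
  ea : e * a = lam • e
  F1 : a * (y * e) = q0i • (y * e) - (q1 * q0i) • e
  F2 : (e * y) * a = q0i • (e * y) - (q1 * q0i) • e
  F3 : e * (y * e) = A • e

namespace Lv

variable {lam lami deli q0 q0i q1 A del x : R} {a a' e y : B}

theorem ca (L : Lv lam deli q0i q1 A a a' e y) (z : B) : a * (a' * z) = z := by
  rw [← mul_assoc, L.inv1, one_mul]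

theorem ca' (L : Lv lam deli q0i q1 A a a' e y) (z : B) : a' * (a * z) = z := by
  rw [← mul_assoc, L.inv2, one_mul]

theorem a'e (L : Lv lam deli q0i q1 A a a' e y) (hlam : lam * lami = 1) :
    a' * e = lami • e := by
  have h : lam • (a' * e) = e := by
    rw [← mul_smul_comm, ← L.ae, ← mul_assoc, L.inv2, one_mul]
  calc a' * e = (lami * lam) • (a' * e) := by rw [mul_comm lami lam, hlam, one_smul]
    _ = lami • (lam • (a' * e)) := by rw [mul_smul]
    _ = lami • e := by rw [h]

theorem ea' (L : Lv lam deli q0i q1 A a a' e y) (hlam : lam * lami = 1) :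
    e * a' = lami • e := by
  have h : lam • (e * a') = e := by
    rw [← smul_mul_assoc, ← L.ea, mul_assoc, L.inv1, mul_one]
  calc e * a' = (lami * lam) • (e * a') := by rw [mul_comm lami lam, hlam, one_smul]
    _ = lami • (lam • (e * a')) := by rw [mul_smul]
    _ = lami • e := by rw [h]

theorem ee (L : Lv lam deli q0i q1 A a a' e y) (hlam : lam * lami = 1)
    (hdel : del * deli = 1) (hx : x * del = del - lam + lami) :
    e * e = x • e := by
  have hxval : x = 1 - deli * lam + deli * lami := by
    have : x * del * deli = (del - lam + lami) * deli := by rw [hx]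
    rw [mul_assoc, hdel, mul_one] at this
    linear_combination this + hdel
  calc e * e = (1 - deli • (a - a')) * e := by rw [← L.edef]
    _ = e - deli • (a * e - a' * e) := by
        simp [sub_mul, smul_mul_assoc, smul_sub]
    _ = e - deli • (lam • e - lami • e) := by rw [L.ae, L.a'e hlam]
    _ = x • e := by rw [hxval]; module


theorem amid (L : Lv lam deli q0i q1 A a a' e y) (hdel : del * deli = 1) :
    a = a' + del • (1:B) - del • e := by
  have h : del • e = del • (1:B) - a + a' := by
    rw [L.edef, smul_sub, smul_smul, hdel, one_smul]; abel
  rw [h]; abel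

theorem a'mid (L : Lv lam deli q0i q1 A a a' e y) (hdel : del * deli = 1) :
    a' = a - del • (1:B) + del • e := by
  have h := L.amid (del := del) hdel
  rw [h]; abel

theorem cb {b b' : B} (hb1 : b * b' = 1) (z : B) : b * (b' * z) = z := by
  rw [← mul_assoc, hb1, one_mul]

theorem F1z (L : Lv lam deli q0i q1 A a a' e y) (z : B) :
    a * (y * (e * z)) = q0i • (y * (e * z)) - (q1 * q0i) • (e * z) := by
  have := congrArg (fun w => w * z) L.F1
  simpa [mul_assoc, sub_mul, smul_mul_assoc] using this

theorem F2z (L : Lv lam deli q0i q1 A a a' e y) (z : B) :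
    e * (y * (a * z)) = q0i • (e * (y * z)) - (q1 * q0i) • (e * z) := by
  have := congrArg (fun w => w * z) L.F2
  simpa [mul_assoc, sub_mul, smul_mul_assoc] using this

theorem F3z (L : Lv lam deli q0i q1 A a a' e y) (z : B) :
    e * (y * (e * z)) = A • (e * z) := by
  have := congrArg (fun w => w * z) L.F3
  simpa [mul_assoc, smul_mul_assoc] using this

theorem a'ye (L : Lv lam deli q0i q1 A a a' e y) (hq0u : q0 * q0i = 1)
    (hlam : lam * lami = 1) :
    a' * (y * e) = q0 • (y * e) + (q1 * lami) • e := by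
  have h0 : a' * (a * (y * e)) = y * e := L.ca' _
  rw [L.F1, mul_sub, mul_smul_comm, mul_smul_comm, L.a'e hlam, smul_smul] at h0
  have h1 := congrArg (fun w => q0 • w) h0
  simp only [smul_sub, smul_smul] at h1
  rw [hq0u, one_smul, sub_eq_iff_eq_add] at h1
  rw [h1]
  match_scalars <;> first | ring1 | linear_combination (q1 * lami) * hq0u

theorem yea' (L : Lv lam deli q0i q1 A a a' e y) (hq0u : q0 * q0i = 1)
    (hlam : lam * lami = 1) :
    (e * y) * a' = q0 • (e * y) + (q1 * lami) • e := by
  have h0 : ((e * y) * a) * a' = e * y := by rw [mul_assoc, L.inv1, mul_one]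
  rw [L.F2, sub_mul, smul_mul_assoc, smul_mul_assoc, L.ea' hlam, smul_smul] at h0
  have h1 := congrArg (fun w => q0 • w) h0
  simp only [smul_sub, smul_smul] at h1
  rw [hq0u, one_smul, sub_eq_iff_eq_add] at h1
  rw [h1]
  match_scalars <;> first | ring1 | linear_combination (q1 * lami) * hq0u

theorem Estar (L : Lv lam deli q0i q1 A a a' e y) (hq0u : q0 * q0i = 1)
    (hlam : lam * lami = 1) (hdel : del * deli = 1) :
    (q0i - q0 - del) • (y * e) = (q1 * lami - del * A + q1 * q0i) • e := by
  have h2 : a * (y * e) =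
      q0 • (y * e) + (q1 * lami) • e + del • (y * e) - (del * A) • e := by
    conv_lhs => rw [L.amid hdel]
    simp only [add_mul, sub_mul, smul_mul_assoc, one_mul]
    rw [L.a'ye hq0u hlam, L.F3]
    module
  have h3 : q0i • (y * e) - (q1 * q0i) • e =
      q0 • (y * e) + (q1 * lami) • e + del • (y * e) - (del * A) • e :=
    L.F1.symm.trans h2
  calc (q0i - q0 - del) • (y * e)
      = ((q0i • (y * e) - (q1 * q0i) • e) -
          (q0 • (y * e) + (q1 * lami) • e + del • (y * e) - (del * A) • e))
        + (q1 * lami - del * A + q1 * q0i) • e := by module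
    _ = (q1 * lami - del * A + q1 * q0i) • e := by rw [h3, sub_self, zero_add]

theorem F4 (L : Lv lam deli q0i q1 A a a' e y) (hq0u : q0 * q0i = 1)
    (hlam : lam * lami = 1) (hdel : del * deli = 1)
    (hx : x * del = del - lam + lami) :
    (q1 * x) • e = (A - q0 * lam * A) • e := by
  have h1 : e * (a * (y * e)) = (lam * A) • e := by
    rw [← mul_assoc, L.ea, smul_mul_assoc, L.F3, smul_smul]
  have h2 : e * (a * (y * e)) = q0i • (A • e) - (q1 * q0i) • (x • e) := by
    rw [L.F1, mul_sub, mul_smul_comm, mul_smul_comm, L.F3, L.ee hlam hdel hx]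
  have h3 : (lam * A) • e = q0i • (A • e) - (q1 * q0i) • (x • e) :=
    h1.symm.trans h2
  have hz : ((q0 * q0i - 1) * (A - q1 * x)) • e = 0 := by
    rw [show q0 * q0i - 1 = 0 by rw [hq0u]; ring, zero_mul, zero_smul]
  calc (q1 * x) • e
      = q0 • ((lam * A) • e - (q0i • (A • e) - (q1 * q0i) • (x • e)))
        + ((q0 * q0i - 1) * (A - q1 * x)) • e + (A - q0 * lam * A) • e := by
        module
    _ = (A - q0 * lam * A) • e := by
        rw [h3, sub_self, smul_zero, hz, zero_add, zero_add]

theorem G3 (L : Lv lam deli q0i q1 A a a' e y) (hq0u : q0 * q0i = 1)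
    (hlam : lam * lami = 1) (hdel : del * deli = 1)
    (hx : x * del = del - lam + lami) :
    (1 - q0 * del) • ((a * y) * e) =
      (q1 * lam - q0 * del * lam * A) • e + q0 • (y * e) := by
  have hE := L.Estar (del := del) hq0u hlam hdel
  have hF := L.F4 (del := del) (x := x) hq0u hlam hdel hx
  have hz1 : (q0 * q0i - 1 : R) = 0 := by rw [hq0u]; ring
  have hz2 : (x * del - (del - lam + lami) : R) = 0 := by rw [hx]; ring
  rw [mul_assoc, L.F1]
  calc (1 - q0 * del) • (q0i • (y * e) - (q1 * q0i) • e)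
      = ((q0i - q0 - del) • (y * e) - (q1 * lami - del * A + q1 * q0i) • e)
        + del • ((q1 * x) • e - (A - q0 * lam * A) • e)
        + ((q0 * q0i - 1) * (-del)) • (y * e)
        + ((q0 * q0i - 1) * (del * q1)) • e
        + ((x * del - (del - lam + lami)) * (-q1)) • e
        + ((q1 * lam - q0 * del * lam * A) • e + q0 • (y * e)) := by module
    _ = (q1 * lam - q0 * del * lam * A) • e + q0 • (y * e) := by
        rw [hE, hF, hz1, hz2]; simp

theorem G1 (L : Lv lam deli q0i q1 A a a' e y) (hlam : lam * lami = 1) :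
    ((a * y) * a') * e = (lami * q0i) • (y * e) - (q1 * q0i * lami) • e := by
  calc ((a * y) * a') * e = (a * y) * (a' * e) := by rw [mul_assoc]
    _ = lami • (a * (y * e)) := by rw [L.a'e hlam, mul_smul_comm, mul_assoc]
    _ = lami • (q0i • (y * e) - (q1 * q0i) • e) := by rw [L.F1]
    _ = (lami * q0i) • (y * e) - (q1 * q0i * lami) • e := by module

theorem G2 (L : Lv lam deli q0i q1 A a a' e y) (hdel : del * deli = 1) :
    e * ((a * y) * a') =
      (lam * (q0i - del)) • (e * y) + (lam * (del * A - q1 * q0i)) • e := by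
  have hF3' : (e * y) * e = A • e := by rw [mul_assoc, L.F3]
  calc e * ((a * y) * a') = ((e * a) * y) * a' := by simp only [mul_assoc]
    _ = lam • ((e * y) * a') := by rw [L.ea, smul_mul_assoc, smul_mul_assoc]
    _ = lam • ((e * y) * (a - del • (1:B) + del • e)) := by rw [← L.a'mid hdel]
    _ = lam • ((e * y) * a - del • (e * y) + del • (A • e)) := by
        rw [mul_add, mul_sub, mul_smul_comm, mul_smul_comm, mul_one, hF3']
    _ = lam • ((q0i • (e * y) - (q1 * q0i) • e) - del • (e * y) + del • (A • e)) := by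
        rw [L.F2]
    _ = (lam * (q0i - del)) • (e * y) + (lam * (del * A - q1 * q0i)) • e := by
        module


end Lv

section Mk

variable {lam lami deli q0 q0i q1 A del x : R} {a a' b b' e e2 y : B}

theorem mkF1 (hq0u : q0 * q0i = 1)
    (hYsq : y * y = q1 • y + q0 • (1:B))
    (hYXYe : ((y * a) * y) * e = e) :
    a * (y * e) = q0i • (y * e) - (q1 * q0i) • e := by
  have hzy : (q0i • y - (q1 * q0i) • (1:B)) * y = 1 := by
    rw [sub_mul, smul_mul_assoc, smul_mul_assoc, one_mul, hYsq]
    match_scalars <;> first | ring1 | linear_combination hq0u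
  calc a * (y * e) = ((q0i • y - (q1 * q0i) • (1:B)) * y) * (a * (y * e)) := by
        rw [hzy, one_mul]
    _ = (q0i • y - (q1 * q0i) • (1:B)) * (((y * a) * y) * e) := by
        simp only [mul_assoc]
    _ = (q0i • y - (q1 * q0i) • (1:B)) * e := by rw [hYXYe]
    _ = q0i • (y * e) - (q1 * q0i) • e := by
        simp only [sub_mul, smul_mul_assoc, one_mul]

theorem mkeYXY (inv1 : a * a' = 1) (inv2 : a' * a = 1)
    (edef : e = 1 - deli • (a - a'))
    (hYXYe : ((y * a) * y) * e = e)
    (hXYXY : ((a * y) * a) * y = ((y * a) * y) * a) :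
    ((e * y) * a) * y = e := by
  have ha : a * ((y * a) * y) = ((y * a) * y) * a := by
    simp only [mul_assoc] at hXYXY ⊢; exact hXYXY
  have ha' : a' * ((y * a) * y) = ((y * a) * y) * a' := by
    calc a' * ((y * a) * y) = a' * ((((y * a) * y) * a) * a') :=
          (by rw [mul_assoc ((y * a) * y) a a', inv1, mul_one] :
            a' * ((((y * a) * y) * a) * a') = a' * ((y * a) * y)).symm
      _ = a' * ((a * ((y * a) * y)) * a') := by rw [← ha]
      _ = ((y * a) * y) * a' := by
          rw [mul_assoc a ((y * a) * y) a', ← mul_assoc a' a, inv2, one_mul]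
  have he : e * ((y * a) * y) = ((y * a) * y) * e := by
    rw [edef]
    simp only [sub_mul, mul_sub, one_mul, mul_one, smul_mul_assoc,
      mul_smul_comm, ha, ha']
  calc ((e * y) * a) * y = e * ((y * a) * y) := by simp only [mul_assoc]
    _ = ((y * a) * y) * e := he
    _ = e := hYXYe

theorem mkF2 (hq0u : q0 * q0i = 1) (inv1 : a * a' = 1) (inv2 : a' * a = 1)
    (edef : e = 1 - deli • (a - a'))
    (hYsq : y * y = q1 • y + q0 • (1:B))
    (hYXYe : ((y * a) * y) * e = e)
    (hXYXY : ((a * y) * a) * y = ((y * a) * y) * a) :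
    (e * y) * a = q0i • (e * y) - (q1 * q0i) • e := by
  have heYXY := mkeYXY inv1 inv2 edef hYXYe hXYXY
  have hyz : y * (q0i • y - (q1 * q0i) • (1:B)) = 1 := by
    rw [mul_sub, mul_smul_comm, mul_smul_comm, mul_one, hYsq]
    match_scalars <;> first | ring1 | linear_combination hq0u
  calc (e * y) * a
      = (((e * y) * a) * y) * (q0i • y - (q1 * q0i) • (1:B)) := by
        exact (by rw [mul_assoc, hyz, mul_one] :
          (((e * y) * a) * y) * (q0i • y - (q1 * q0i) • (1:B)) = (e * y) * a).symm
    _ = e * (q0i • y - (q1 * q0i) • (1:B)) := by rw [heYXY]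
    _ = q0i • (e * y) - (q1 * q0i) • e := by
        simp only [mul_sub, mul_smul_comm, mul_one]

theorem step (L : Lv lam deli q0i q1 A a a' e y)
    (hb1 : b * b' = 1) (hb2 : b' * b = 1)
    (hbr : a * (b * a) = b * (a * b))
    (hyb : y * b = b * y) (hyb' : y * b' = b' * y)
    (he2 : e2 = 1 - deli • (b - b')) :
    (b * ((((a * y) * a') * e2)) =
        q0i • (((a * y) * a') * e2) - (q1 * q0i) • e2) ∧
    ((e2 * ((a * y) * a')) * b =
        q0i • (e2 * ((a * y) * a')) - (q1 * q0i) • e2) ∧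
    (e2 * (((a * y) * a') * e2) = A • e2) := by
  have cbz : ∀ z : B, b * (b' * z) = z := fun z => by
    rw [← mul_assoc, hb1, one_mul]
  have cb'z : ∀ z : B, b' * (b * z) = z := fun z => by
    rw [← mul_assoc, hb2, one_mul]
  have ybz : ∀ z : B, y * (b * z) = b * (y * z) := fun z => by
    rw [← mul_assoc, hyb, mul_assoc]
  have yb'z : ∀ z : B, b' * (y * z) = y * (b' * z) := fun z => by
    rw [← mul_assoc, ← hyb', mul_assoc]
  have brz : ∀ z : B, b * (a * (b * z)) = a * (b * (a * z)) := fun z => by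
    have := congrArg (fun w => w * z) hbr
    simp only [mul_assoc] at this
    exact this.symm
  have h5a : b' * (a * (b * a)) = a * b := by rw [hbr]; exact cb'z _
  have k5 : b' * (a * b) = a * (b * a') := by
    calc b' * (a * b) = b' * (a * (b * (a * a'))) := by rw [L.inv1, mul_one]
      _ = (b' * (a * (b * a))) * a' := by simp only [mul_assoc]
      _ = (a * b) * a' := by rw [h5a]
      _ = a * (b * a') := by rw [mul_assoc]
  have k6 : b' * (a' * b) = a * (b' * a') := by
    refine inv_unique' (w := b' * (a * b)) ?_ ?_
    · simp only [mul_assoc, cbz, L.ca', hb2]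
    · rw [k5]
      simp only [mul_assoc, L.ca', cbz, L.inv1]
  have ibr : b' * (a' * b') = a' * (b' * a') := by
    refine inv_unique' (w := a * (b * a)) ?_ ?_
    · rw [hbr]
      simp only [mul_assoc, cb'z, L.ca', hb2]
    · simp only [mul_assoc, L.ca, cbz, L.inv1]
  have t0 : a * (b * (b' * a')) = 1 := by
    rw [cbz, L.inv1]
  have t1 : a * (b * (a * (b' * a'))) = b := by
    rw [← k6, cbz, L.ca]
  have t2 : a * (b * (a' * (b' * a'))) = b' := by
    rw [← ibr, cbz, L.ca]
  have conj : e2 = a * (b * (e * (b' * a'))) := by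
    calc e2 = 1 - deli • b + deli • b' := by rw [he2]; module
      _ = a * (b * ((1 - deli • (a - a')) * (b' * a'))) := by
          simp only [sub_mul, one_mul, smul_mul_assoc, mul_sub, mul_smul_comm,
            smul_sub]
          rw [t0, t1, t2]
          module
      _ = a * (b * (e * (b' * a'))) := by rw [← L.edef]
  have c1 : ((a * y) * a') * e2 = a * (b * (y * (e * (b' * a')))) := by
    rw [conj]; simp only [mul_assoc, L.ca', ybz]
  have c2 : e2 * ((a * y) * a') = a * (b * (e * (y * (b' * a')))) := by
    rw [conj]; simp only [mul_assoc, L.ca', yb'z]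
  refine ⟨?_, ?_, ?_⟩
  · rw [c1, conj, brz, L.F1z]
    simp only [mul_sub, mul_smul_comm]
  · rw [c2, conj]
    simp only [mul_assoc]
    rw [k6, L.F2z]
    simp only [mul_sub, mul_smul_comm]
  · rw [c1, conj]
    simp only [mul_assoc, L.ca', cb'z, L.F3z, mul_smul_comm]

end Mk

end Abstract


section Glue

variable {R : Type} [CommRing R] {lam lami deli q0 q0i q1 A : R} {n : ℕ}

theorem mk_rel {x y : FreeAlgebra R (Gen n)} (h : Rel R lam lami deli q0 q1 A n x y) :
    mk R lam lami deli q0 q1 A n x = mk R lam lami deli q0 q1 A n y :=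
  RingQuot.mkAlgHom_rel R h

theorem XX_eq (i : ℕ) (h : i - 1 < n - 1) :
    XX R lam lami deli q0 q1 A n i = mk R lam lami deli q0 q1 A n (fX R ⟨i - 1, h⟩) :=
  dif_pos h

theorem XXi_eq (i : ℕ) (h : i - 1 < n - 1) :
    XXi R lam lami deli q0 q1 A n i = mk R lam lami deli q0 q1 A n (fXinv R ⟨i - 1, h⟩) :=
  dif_pos h

theorem XX_out (i : ℕ) (h : ¬ i - 1 < n - 1) : XX R lam lami deli q0 q1 A n i = 1 :=
  dif_neg h

theorem XXi_out (i : ℕ) (h : ¬ i - 1 < n - 1) : XXi R lam lami deli q0 q1 A n i = 1 :=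
  dif_neg h

theorem YY_eq (hn : 0 < n) :
    YY R lam lami deli q0 q1 A n = mk R lam lami deli q0 q1 A n (fY R hn) :=
  dif_pos hn

theorem ee_eq (i : ℕ) (h : i - 1 < n - 1) :
    ee R lam lami deli q0 q1 A n i = mk R lam lami deli q0 q1 A n (fe R deli ⟨i - 1, h⟩) := by
  rw [ee, XX_eq i h, XXi_eq i h, fe, map_sub, map_one, map_smul, map_sub]

theorem bXXi (i : ℕ) : XX R lam lami deli q0 q1 A n i * XXi R lam lami deli q0 q1 A n i = 1 := by
  by_cases h : i - 1 < n - 1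
  · rw [XX_eq i h, XXi_eq i h, ← map_mul, mk_rel (Rel.XXinv _), map_one]
  · rw [XX_out i h, XXi_out i h, one_mul]

theorem bXiX (i : ℕ) : XXi R lam lami deli q0 q1 A n i * XX R lam lami deli q0 q1 A n i = 1 := by
  by_cases h : i - 1 < n - 1
  · rw [XX_eq i h, XXi_eq i h, ← map_mul, mk_rel (Rel.XinvX _), map_one]
  · rw [XX_out i h, XXi_out i h, one_mul]

theorem bXe (i : ℕ) (h : i - 1 < n - 1) :
    XX R lam lami deli q0 q1 A n i * ee R lam lami deli q0 q1 A n i =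
      lam • ee R lam lami deli q0 q1 A n i := by
  rw [XX_eq i h, ee_eq i h, ← map_mul, mk_rel (Rel.Xe _), map_smul]

theorem beX (i : ℕ) (h : i - 1 < n - 1) :
    ee R lam lami deli q0 q1 A n i * XX R lam lami deli q0 q1 A n i =
      lam • ee R lam lami deli q0 q1 A n i := by
  rw [XX_eq i h, ee_eq i h, ← map_mul, mk_rel (Rel.eX _), map_smul]

theorem bbraid (i : ℕ) (h1 : 1 ≤ i) (h2 : i + 1 ≤ n - 1) :
    XX R lam lami deli q0 q1 A n i * (XX R lam lami deli q0 q1 A n (i + 1) *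
      XX R lam lami deli q0 q1 A n i) =
    XX R lam lami deli q0 q1 A n (i + 1) * (XX R lam lami deli q0 q1 A n i *
      XX R lam lami deli q0 q1 A n (i + 1)) := by
  have hi : i - 1 < n - 1 := by omega
  have hi1 : (i + 1) - 1 < n - 1 := by omega
  have := mk_rel (n := n) (lam := lam) (lami := lami) (deli := deli) (q0 := q0)
    (q1 := q1) (A := A) (Rel.braid ⟨i - 1, hi⟩ ⟨(i + 1) - 1, hi1⟩ (by
      show (i - 1) + 1 = (i + 1) - 1
      omega))
  rw [XX_eq i hi, XX_eq (i + 1) hi1]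
  simp only [map_mul] at this
  simp only [← mul_assoc]
  exact this

theorem bcomm (j k : ℕ) (h1 : 1 ≤ j) (h : j + 2 ≤ k) :
    XX R lam lami deli q0 q1 A n k * XX R lam lami deli q0 q1 A n j =
      XX R lam lami deli q0 q1 A n j * XX R lam lami deli q0 q1 A n k := by
  by_cases hk : k - 1 < n - 1
  · have hj : j - 1 < n - 1 := by omega
    have := mk_rel (n := n) (lam := lam) (lami := lami) (deli := deli) (q0 := q0)
      (q1 := q1) (A := A) (Rel.comm ⟨k - 1, hk⟩ ⟨j - 1, hj⟩ (by
        show (j - 1) + 1 < k - 1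
        omega))
    rw [XX_eq j hj, XX_eq k hk]
    simp only [map_mul] at this
    exact this
  · rw [XX_out k hk, one_mul, mul_one]

theorem bYcomm (i : ℕ) (h2 : 2 ≤ i) :
    YY R lam lami deli q0 q1 A n * XX R lam lami deli q0 q1 A n i =
      XX R lam lami deli q0 q1 A n i * YY R lam lami deli q0 q1 A n := by
  by_cases h : i - 1 < n - 1
  · have hn : 0 < n := by omega
    have := mk_rel (n := n) (lam := lam) (lami := lami) (deli := deli) (q0 := q0)
      (q1 := q1) (A := A) (Rel.Ycomm hn ⟨i - 1, h⟩ (show 0 < i - 1 by omega))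
    rw [YY_eq hn, XX_eq i h]
    simp only [map_mul] at this
    exact this
  · rw [XX_out i h, one_mul, mul_one]

theorem bYsq (hn : 0 < n) :
    YY R lam lami deli q0 q1 A n * YY R lam lami deli q0 q1 A n =
      q1 • YY R lam lami deli q0 q1 A n + q0 • (1 : BB R lam lami deli q0 q1 A n) := by
  rw [YY_eq hn, ← map_mul, mk_rel (Rel.Ysq hn), map_add, map_smul, map_smul, map_one]

theorem bYXYe (hn2 : 2 ≤ n) :
    ((YY R lam lami deli q0 q1 A n * XX R lam lami deli q0 q1 A n 1) *
        YY R lam lami deli q0 q1 A n) * ee R lam lami deli q0 q1 A n 1 =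
      ee R lam lami deli q0 q1 A n 1 := by
  have hn : 0 < n := by omega
  have h : (1 : ℕ) - 1 < n - 1 := by omega
  have := mk_rel (n := n) (lam := lam) (lami := lami) (deli := deli) (q0 := q0)
    (q1 := q1) (A := A) (Rel.YXYe hn ⟨1 - 1, h⟩ rfl)
  rw [YY_eq hn, XX_eq 1 h, ee_eq 1 h]
  simp only [map_mul] at this
  exact this

theorem bXYXY (hn2 : 2 ≤ n) :
    ((XX R lam lami deli q0 q1 A n 1 * YY R lam lami deli q0 q1 A n) *
        XX R lam lami deli q0 q1 A n 1) * YY R lam lami deli q0 q1 A n =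
      ((YY R lam lami deli q0 q1 A n * XX R lam lami deli q0 q1 A n 1) *
        YY R lam lami deli q0 q1 A n) * XX R lam lami deli q0 q1 A n 1 := by
  have hn : 0 < n := by omega
  have h : (1 : ℕ) - 1 < n - 1 := by omega
  have := mk_rel (n := n) (lam := lam) (lami := lami) (deli := deli) (q0 := q0)
    (q1 := q1) (A := A) (Rel.bYXYX hn ⟨1 - 1, h⟩ rfl)
  rw [YY_eq hn, XX_eq 1 h]
  simp only [map_mul] at this
  exact this

theorem beYe (hn2 : 2 ≤ n) :
    ee R lam lami deli q0 q1 A n 1 * (YY R lam lami deli q0 q1 A n *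
        ee R lam lami deli q0 q1 A n 1) =
      A • ee R lam lami deli q0 q1 A n 1 := by
  have hn : 0 < n := by omega
  have h : (1 : ℕ) - 1 < n - 1 := by omega
  have := mk_rel (n := n) (lam := lam) (lami := lami) (deli := deli) (q0 := q0)
    (q1 := q1) (A := A) (Rel.eYe hn ⟨1 - 1, h⟩ rfl)
  rw [YY_eq hn, ee_eq 1 h]
  simp only [map_mul, map_smul] at this
  rw [← mul_assoc]
  exact this

theorem comm_conj {B : Type} [Ring B] {u v vi : B} (h : u * v = v * u)
    (h1 : v * vi = 1) (h2 : vi * v = 1) : u * vi = vi * u := by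
  calc u * vi = vi * (v * (u * vi)) := by rw [← mul_assoc, h2, one_mul]
    _ = vi * ((u * v) * vi) := by rw [← mul_assoc v u vi, ← h]
    _ = vi * (u * (v * vi)) := by rw [mul_assoc u v vi]
    _ = vi * u := by rw [h1, mul_one]

theorem Yn_succ (j : ℕ) (h : 1 ≤ j) :
    Yn R lam lami deli q0 q1 A n (j + 1) =
      XX R lam lami deli q0 q1 A n j * Yn R lam lami deli q0 q1 A n j *
        XXi R lam lami deli q0 q1 A n j := by
  obtain ⟨m, rfl⟩ : ∃ m, j = m + 1 := ⟨j - 1, by omega⟩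
  rfl

theorem Ycomm_gen (j : ℕ) (hj : 1 ≤ j) : ∀ k, j + 1 ≤ k →
    (Yn R lam lami deli q0 q1 A n j * XX R lam lami deli q0 q1 A n k =
      XX R lam lami deli q0 q1 A n k * Yn R lam lami deli q0 q1 A n j) ∧
    (Yn R lam lami deli q0 q1 A n j * XXi R lam lami deli q0 q1 A n k =
      XXi R lam lami deli q0 q1 A n k * Yn R lam lami deli q0 q1 A n j) := by
  induction j, hj using Nat.le_induction with
  | base =>
    intro k hk
    have h1 : Yn R lam lami deli q0 q1 A n 1 * XX R lam lami deli q0 q1 A n k =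
        XX R lam lami deli q0 q1 A n k * Yn R lam lami deli q0 q1 A n 1 :=
      bYcomm k (by omega)
    exact ⟨h1, comm_conj h1 (bXXi k) (bXiX k)⟩
  | succ j hj IH =>
    intro k hk
    have h1 : XX R lam lami deli q0 q1 A n j * XX R lam lami deli q0 q1 A n k =
        XX R lam lami deli q0 q1 A n k * XX R lam lami deli q0 q1 A n j :=
      (bcomm j k hj (by omega)).symm
    have h2 := (IH k (by omega)).1
    have key : Yn R lam lami deli q0 q1 A n (j + 1) * XX R lam lami deli q0 q1 A n k =
        XX R lam lami deli q0 q1 A n k * Yn R lam lami deli q0 q1 A n (j + 1) := by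
      rw [Yn_succ j hj]
      calc (XX R lam lami deli q0 q1 A n j * Yn R lam lami deli q0 q1 A n j *
              XXi R lam lami deli q0 q1 A n j) * XX R lam lami deli q0 q1 A n k
          = XX R lam lami deli q0 q1 A n j * (Yn R lam lami deli q0 q1 A n j *
              (XXi R lam lami deli q0 q1 A n j * XX R lam lami deli q0 q1 A n k)) := by
            simp only [mul_assoc]
        _ = XX R lam lami deli q0 q1 A n j * (Yn R lam lami deli q0 q1 A n j *
              (XX R lam lami deli q0 q1 A n k * XXi R lam lami deli q0 q1 A n j)) := by
            rw [comm_conj h1.symm (bXXi j) (bXiX j)]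
        _ = XX R lam lami deli q0 q1 A n j * ((Yn R lam lami deli q0 q1 A n j *
              XX R lam lami deli q0 q1 A n k) * XXi R lam lami deli q0 q1 A n j) := by
            rw [mul_assoc]
        _ = XX R lam lami deli q0 q1 A n j * ((XX R lam lami deli q0 q1 A n k *
              Yn R lam lami deli q0 q1 A n j) * XXi R lam lami deli q0 q1 A n j) := by
            rw [h2]
        _ = (XX R lam lami deli q0 q1 A n j * XX R lam lami deli q0 q1 A n k) *
              (Yn R lam lami deli q0 q1 A n j * XXi R lam lami deli q0 q1 A n j) := by
            simp only [mul_assoc]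
        _ = XX R lam lami deli q0 q1 A n k * (XX R lam lami deli q0 q1 A n j *
              Yn R lam lami deli q0 q1 A n j * XXi R lam lami deli q0 q1 A n j) := by
            rw [h1]
            simp only [mul_assoc]
    exact ⟨key, comm_conj key (bXXi k) (bXiX k)⟩

theorem pkg (q0i : R) (hq0u : q0 * q0i = 1) (j : ℕ) (hj : 1 ≤ j) (hjn : j ≤ n - 1) :
    Lv lam deli q0i q1 A (XX R lam lami deli q0 q1 A n j) (XXi R lam lami deli q0 q1 A n j)
      (ee R lam lami deli q0 q1 A n j) (Yn R lam lami deli q0 q1 A n j) := by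
  induction j, hj using Nat.le_induction with
  | base =>
    have hn2 : 2 ≤ n := by omega
    have h : (1 : ℕ) - 1 < n - 1 := by omega
    have hY1 : Yn R lam lami deli q0 q1 A n 1 = YY R lam lami deli q0 q1 A n := rfl
    refine ⟨bXXi 1, bXiX 1, rfl, bXe 1 h, beX 1 h, ?_, ?_, ?_⟩
    · rw [hY1]
      exact mkF1 hq0u (bYsq (by omega)) (bYXYe hn2)
    · rw [hY1]
      exact mkF2 hq0u (bXXi 1) (bXiX 1) rfl (bYsq (by omega)) (bYXYe hn2) (bXYXY hn2)
    · rw [hY1]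
      exact beYe hn2
  | succ j hj IH =>
    have hjn' : j ≤ n - 1 := by omega
    have L := IH hjn'
    have hh : (j + 1) - 1 < n - 1 := by omega
    obtain ⟨f1, f2, f3⟩ := step L (bXXi (j + 1)) (bXiX (j + 1)) (bbraid j hj hjn)
      (Ycomm_gen j hj (j + 1) (by omega)).1 (Ycomm_gen j hj (j + 1) (by omega)).2 rfl
    refine ⟨bXXi (j + 1), bXiX (j + 1), rfl, bXe (j + 1) hh, beX (j + 1) hh, ?_, ?_, ?_⟩
    · rw [Yn_succ j hj]; exact f1
    · rw [Yn_succ j hj]; exact f2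
    · rw [Yn_succ j hj]; exact f3

end Glue

/-- In `BB_n(R)`: the rewriting relations (\ref{lem2q1}), (\ref{lem2q2}) and (\ref{lem2e})
of Lemma 4. -/
theorem BB_rewriting_relations (R : Type) [CommRing R] [IsDomain R]
    (q qi lam lami del deli q0 q0i q1 A x : R)
    (hq : q * qi = 1) (hlam : lam * lami = 1) (hdel : del * deli = 1) (hq0u : q0 * q0i = 1)
    (hdelta : del = q - qi) (hx : x * del = del - lam + lami) (n : ℕ) :
    (∀ i, 2 ≤ i → i ≤ n →
      Yn R lam lami deli q0 q1 A n i * ee R lam lami deli q0 q1 A n (i - 1) =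
        (lami * q0i) • (Yn R lam lami deli q0 q1 A n (i - 1) * ee R lam lami deli q0 q1 A n (i - 1)) -
          (q1 * q0i * lami) • ee R lam lami deli q0 q1 A n (i - 1)) ∧
    (∀ i, 2 ≤ i → i ≤ n →
      ee R lam lami deli q0 q1 A n (i - 1) * Yn R lam lami deli q0 q1 A n i =
        (lam * (q0i - del)) • (ee R lam lami deli q0 q1 A n (i - 1) * Yn R lam lami deli q0 q1 A n (i - 1)) +
          (lam * (del * A - q1 * q0i)) • ee R lam lami deli q0 q1 A n (i - 1)) ∧
    (∀ i, 1 ≤ i → i ≤ n - 1 →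
      (1 - q0 * del) • (XX R lam lami deli q0 q1 A n i * Yn R lam lami deli q0 q1 A n i * ee R lam lami deli q0 q1 A n i) =
        (q1 * lam - q0 * del * lam * A) • ee R lam lami deli q0 q1 A n i + q0 • (Yn R lam lami deli q0 q1 A n i * ee R lam lami deli q0 q1 A n i)) := by
  refine ⟨?_, ?_, ?_⟩
  · intro i h2 hn
    obtain ⟨j, rfl⟩ : ∃ j, i = j + 2 := ⟨i - 2, by omega⟩
    rw [show j + 2 - 1 = j + 1 from rfl]
    have L := pkg (lam := lam) (lami := lami) (deli := deli) (q1 := q1) (A := A) (n := n) q0i hq0u (j + 1) (by omega) (by omega)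
    rw [show Yn R lam lami deli q0 q1 A n (j + 2) =
        XX R lam lami deli q0 q1 A n (j + 1) * Yn R lam lami deli q0 q1 A n (j + 1) *
          XXi R lam lami deli q0 q1 A n (j + 1) from rfl]
    exact L.G1 hlam
  · intro i h2 hn
    obtain ⟨j, rfl⟩ : ∃ j, i = j + 2 := ⟨i - 2, by omega⟩
    rw [show j + 2 - 1 = j + 1 from rfl]
    have L := pkg (lam := lam) (lami := lami) (deli := deli) (q1 := q1) (A := A) (n := n) q0i hq0u (j + 1) (by omega) (by omega)
    rw [show Yn R lam lami deli q0 q1 A n (j + 2) =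
        XX R lam lami deli q0 q1 A n (j + 1) * Yn R lam lami deli q0 q1 A n (j + 1) *
          XXi R lam lami deli q0 q1 A n (j + 1) from rfl]
    exact L.G2 hdel
  · intro i h1 h2
    exact (pkg q0i hq0u i h1 h2).G3 hq0u hlam hdel hx

end BMWB
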